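/- arXiv:0810.4907 — 4 statements merged into one kernel-verified Lean document; each statement's English description precedes it below -/
import Mathlib

section
/- (Univariate Newton–Puiseux with principal terms.) Let f̃(x) = Σ_{i=0}^m ã_i x^i ∈ K[x] be a nonzero polynomial over the field K of Puiseux series over ℂ. Let r ∈ ℚ be such that min_i {o(ã_i) + i·r} is attained for at least two indices, and let γ ∈ ℂ* be a root of the initial form f̃_r(x) = Σ_{i : o(ã_i)+i·r minimal} pc(ã_i) x^i. Then there exists x̃ ∈ K* with f̃(x̃) = 0, o(x̃) = r, and pc(x̃) = γ. -/
noncomputable section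

/-- The field of (generalized) Puiseux series over `ℂ`, modeled as Hahn series
with value group `ℚ` and coefficients in `ℂ`. -/
abbrev K : Type := HahnSeries ℚ ℂ

/-- The principal coefficient of a Puiseux series. -/
def pc (a : K) : ℂ := a.coeff a.order

/-- The weight of index `i` of the univariate polynomial `f` at `r`:
`o(a_i) + i·r`. -/
def wtP (f : Polynomial K) (r : ℚ) (i : ℕ) : ℚ :=
  (f.coeff i).order + (i : ℚ) * r

/-- The tropicalization `f(r) = min_i (o(a_i) + i·r)`. -/
def tropP (f : Polynomial K) (r : ℚ) : WithTop ℚ :=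
  f.support.inf fun i => (wtP f r i : WithTop ℚ)

/-- The initial form `f̃_r ∈ ℂ[x]`. -/
def initFormP (f : Polynomial K) (r : ℚ) : Polynomial ℂ :=
  ∑ i ∈ f.support.filter fun i => (wtP f r i : WithTop ℚ) = tropP f r,
    Polynomial.monomial i (pc (f.coeff i))


/-!
Start from `x₀ = γ t^r`. While `f x ≠ 0`, let `ρ` be the slope of the first edge of the Newton
polygon of `f (x + X)` and pass to any `y` with `y - x = c t^ρ + (higher terms)`, where `c ≠ 0`
is a root of the corresponding initial form. Then `o(f y) > W := o(f x)`, whereas the coefficient of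
`X ^ j` in `f (y + X)`, for `j` the degree of the initial form, still has order `W - j ρ`; hence
the next slope is strictly larger than `ρ`. Along a chain of such steps the coefficients below the
current slope stabilize, Hahn series contain the resulting limits, and Zorn's lemma yields a
maximal approximation, which must be a root. The first step is the same argument at slope `r`, so
all corrections have order `> r` and change neither `o` nor `pc`.
-/

open Polynomial

namespace HahnSeries

variable {Γ R : Type*}

theorem order_eq_of_orderTop_eq [Zero Γ] [LinearOrder Γ] [Zero R] {x : HahnSeries Γ R} {a : Γ}
    (h : x.orderTop = a) : x.order = a := by
  have hx : x ≠ 0 := orderTop_ne_top.mp (h ▸ WithTop.coe_ne_top)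
  rw [← WithTop.coe_eq_coe, order_eq_orderTop_of_ne_zero hx, h]

theorem coeff_mul_add_order [AddCommMonoid Γ] [LinearOrder Γ] [IsOrderedCancelAddMonoid Γ]
    [NonUnitalNonAssocSemiring R] {x y : HahnSeries Γ R} {a : Γ}
    (ha : (a : WithTop Γ) ≤ x.orderTop) :
    (x * y).coeff (a + y.order) = x.coeff a * y.leadingCoeff := by
  rcases eq_or_ne y 0 with rfl | hy
  · simp
  rcases ha.lt_or_eq with ha | ha
  · rw [coeff_eq_zero_of_lt_orderTop ha, zero_mul]
    refine coeff_eq_zero_of_lt_orderTop (lt_of_lt_of_le ?_ orderTop_add_le_mul)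
    rw [← order_eq_orderTop_of_ne_zero hy, WithTop.coe_add]
    exact WithTop.add_lt_add_right WithTop.coe_ne_top ha
  · have hx : x ≠ 0 := orderTop_ne_top.mp (ha ▸ WithTop.coe_ne_top)
    rw [orderTop_of_ne_zero hx, WithTop.coe_eq_coe] at ha
    rw [ha, ← order_of_ne hx, coeff_mul_order_add_order, leadingCoeff_eq]

theorem leadingCoeff_pow [AddCommMonoid Γ] [LinearOrder Γ] [IsOrderedCancelAddMonoid Γ]
    [Semiring R] [NoZeroDivisors R] (x : HahnSeries Γ R) (n : ℕ) :
    (x ^ n).leadingCoeff = x.leadingCoeff ^ n := by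
  induction n with
  | zero => simp
  | succ n ih => rw [pow_succ, leadingCoeff_mul, ih, pow_succ]

theorem coeff_natCast_mul [AddCommMonoid Γ] [PartialOrder Γ] [IsOrderedCancelAddMonoid Γ]
    [Semiring R] (n : ℕ) (x : HahnSeries Γ R) (a : Γ) :
    ((n : HahnSeries Γ R) * x).coeff a = n * x.coeff a := by
  rw [← map_natCast (C (Γ := Γ) (R := R)), C_mul_eq_smul, coeff_smul, smul_eq_mul]

theorem exists_coeff_eq_of_forall_coeff_eq [LinearOrder Γ] [Zero R] {ι : Type*}
    (x : ι → HahnSeries Γ R) (b : ι → Γ)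
    (h : ∀ i j q, q < b i → q < b j → (x i).coeff q = (x j).coeff q) :
    ∃ y : HahnSeries Γ R, ∀ i q, q < b i → y.coeff q = (x i).coeff q := by
  classical
  let F : Γ → R := fun q => if hq : ∃ i, q < b i then (x hq.choose).coeff q else 0
  have hF : ∀ i q, q < b i → F q = (x i).coeff q := fun i q hq =>
    (dif_pos ⟨i, hq⟩).trans <|
      h _ i q (Exists.choose_spec (p := fun j => q < b j) ⟨i, hq⟩) hq
  have hwf : (Function.support F).IsWF := by
    refine Set.isWF_iff_no_descending_seq.mpr fun g hg hsupp => ?_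
    obtain ⟨i, hi⟩ : ∃ i, g 0 < b i := by
      by_contra! hno
      exact hsupp 0 (dif_neg (by simpa using hno))
    have hlt : ∀ n, g n < b i := fun n => (hg.antitone (Nat.zero_le n)).trans_lt hi
    exact Set.isWF_iff_no_descending_seq.mp (x i).isWF_support g hg fun n => by
      simpa [Function.mem_support, hF i (g n) (hlt n)] using hsupp n
  exact ⟨⟨F, hwf.isPWO⟩, hF⟩

end HahnSeries

open HahnSeries

lemma pc_eq_leadingCoeff (a : K) : pc a = a.leadingCoeff := leadingCoeff_eq.symm

section Tropical

variable {g : K[X]} {ρ q : ℚ}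

lemma le_tropP_iff : (q : WithTop ℚ) ≤ tropP g ρ ↔
    ∀ i : ℕ, ((q - i * ρ : ℚ) : WithTop ℚ) ≤ (g.coeff i).orderTop := by
  rw [tropP, Finset.le_inf_iff]
  refine ⟨fun h i => ?_, fun h i hi => ?_⟩
  · by_cases hi : i ∈ g.support
    · have hle := h i hi
      rw [WithTop.coe_le_coe, wtP] at hle
      rw [← order_eq_orderTop_of_ne_zero (mem_support_iff.mp hi), WithTop.coe_le_coe]
      linarith
    · simp [notMem_support_iff.mp hi]
  · have hle := h i
    rw [← order_eq_orderTop_of_ne_zero (mem_support_iff.mp hi), WithTop.coe_le_coe] at hle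
    rw [WithTop.coe_le_coe, wtP]
    linarith

lemma orderTop_coeff_eq_of_wtP_eq {i : ℕ} (hi : i ∈ g.support) (h : wtP g ρ i = q) :
    (g.coeff i).orderTop = ↑(q - i * ρ) := by
  rw [← h, wtP, ← order_eq_orderTop_of_ne_zero (mem_support_iff.mp hi), add_sub_cancel_right]

end Tropical

/-- The coefficient of `t ^ q` in `g (t ^ ρ • X)`. -/
def levelForm (g : K[X]) (ρ q : ℚ) : ℂ[X] :=
  ∑ i ∈ g.support, monomial i ((g.coeff i).coeff (q - i * ρ))

lemma coeff_levelForm (g : K[X]) (ρ q : ℚ) (i : ℕ) :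
    (levelForm g ρ q).coeff i = (g.coeff i).coeff (q - i * ρ) := by
  simp only [levelForm, finsetSum_coeff, coeff_monomial, Finset.sum_ite_eq']
  split_ifs with h
  · rfl
  · rw [notMem_support_iff.mp h, HahnSeries.coeff_zero]

lemma support_levelForm_subset (g : K[X]) (ρ q : ℚ) : (levelForm g ρ q).support ⊆ g.support :=
  fun i hi => mem_support_iff.mpr fun h => mem_support_iff.mp hi <| by
    rw [coeff_levelForm, h, HahnSeries.coeff_zero]

lemma levelForm_hasseDeriv (g : K[X]) (ρ q : ℚ) (j : ℕ) :
    levelForm (hasseDeriv j g) ρ (q - j * ρ) = hasseDeriv j (levelForm g ρ q) := by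
  ext i
  rw [coeff_levelForm, hasseDeriv_coeff, hasseDeriv_coeff, coeff_levelForm,
    HahnSeries.coeff_natCast_mul]
  push_cast
  ring_nf

section LevelForm

variable {g : K[X]} {ρ q : ℚ}

lemma coeff_levelForm_of_orderTop_eq {i : ℕ} (hi : (g.coeff i).orderTop = ↑(q - i * ρ)) :
    (levelForm g ρ q).coeff i = (g.coeff i).leadingCoeff := by
  rw [coeff_levelForm, leadingCoeff_eq, order_eq_of_orderTop_eq hi]

lemma initFormP_eq_levelForm (h : tropP g ρ = q) : initFormP g ρ = levelForm g ρ q := by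
  ext i
  rw [initFormP, finsetSum_coeff]
  simp_rw [coeff_monomial]
  rw [Finset.sum_ite_eq']
  split_ifs with hi <;> rw [Finset.mem_filter, h, WithTop.coe_eq_coe] at hi
  · rw [pc_eq_leadingCoeff, coeff_levelForm_of_orderTop_eq (orderTop_coeff_eq_of_wtP_eq hi.1 hi.2)]
  · rw [coeff_levelForm, eq_comm]
    refine coeff_eq_zero_of_lt_orderTop ((le_tropP_iff.mp h.ge i).lt_of_ne fun heq => ?_)
    refine hi ⟨mem_support_iff.mpr (orderTop_ne_top.mp (heq ▸ WithTop.coe_ne_top)), ?_⟩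
    rw [wtP, order_eq_of_orderTop_eq heq.symm]
    ring

lemma natDegree_levelForm_pos {i j : ℕ} (hij : i ≠ j)
    (hi : (g.coeff i).orderTop = ↑(q - i * ρ)) (hj : (g.coeff j).orderTop = ↑(q - j * ρ)) :
    0 < (levelForm g ρ q).natDegree := by
  have hle : ∀ {k : ℕ}, (g.coeff k).orderTop = ↑(q - k * ρ) →
      k ≤ (levelForm g ρ q).natDegree :=
    fun hk => le_natDegree_of_ne_zero <| by
      rw [coeff_levelForm_of_orderTop_eq hk, HahnSeries.leadingCoeff_ne_zero]
      exact orderTop_ne_top.mp (hk ▸ WithTop.coe_ne_top)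
  have := hle hi
  have := hle hj
  omega

lemma le_tropP_hasseDeriv (hg : (q : WithTop ℚ) ≤ tropP g ρ) (j : ℕ) :
    ((q - j * ρ : ℚ) : WithTop ℚ) ≤ tropP (hasseDeriv j g) ρ := by
  refine le_tropP_iff.mpr fun i => le_orderTop_iff_forall.mpr fun p hp => ?_
  have hgij := le_orderTop_iff_forall.mp (le_tropP_iff.mp hg (i + j))
  rw [hasseDeriv_coeff, HahnSeries.coeff_natCast_mul, hgij p (hp.trans_eq ?_), mul_zero]
  congr 1
  push_cast
  ring

lemma levelForm_eq_zero_of_lt (hg : (q : WithTop ℚ) ≤ tropP g ρ) {p : ℚ} (hp : p < q) :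
    levelForm g ρ p = 0 := by
  ext i
  rw [coeff_levelForm, Polynomial.coeff_zero]
  exact coeff_eq_zero_of_lt_orderTop
    ((WithTop.coe_lt_coe.mpr (by linarith)).trans_le (le_tropP_iff.mp hg i))

end LevelForm

section Evaluation

variable {g : K[X]} {ρ q : ℚ} {z : K}

lemma coeff_eval_eq_eval_levelForm (hg : (q : WithTop ℚ) ≤ tropP g ρ) (hz : z.orderTop = ρ) :
    (g.eval z).coeff q = (levelForm g ρ q).eval z.leadingCoeff := by
  have hterm : ∀ i : ℕ, (g.coeff i * z ^ i).coeff q =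
      (g.coeff i).coeff (q - i * ρ) * z.leadingCoeff ^ i := by
    intro i
    have hq : q = (q - i * ρ) + (z ^ i).order := by
      rw [order_pow, order_eq_of_orderTop_eq hz, nsmul_eq_mul]
      ring
    rw [hq, coeff_mul_add_order (le_tropP_iff.mp hg i), HahnSeries.leadingCoeff_pow, ← hq]
  rw [eval_eq_sum, sum_def, HahnSeries.coeff_sum, eval_eq_sum,
    sum_eq_of_subset (fun i a => a * z.leadingCoeff ^ i) (fun i => zero_mul _)
      (support_levelForm_subset g ρ q)]
  simp only [hterm, coeff_levelForm]

lemma coeff_coeff_taylor (hg : (q : WithTop ℚ) ≤ tropP g ρ) (hz : z.orderTop = ρ) (j : ℕ) :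
    ((taylor z g).coeff j).coeff (q - j * ρ) =
      (taylor z.leadingCoeff (levelForm g ρ q)).coeff j := by
  rw [taylor_coeff, taylor_coeff, ← levelForm_hasseDeriv]
  exact coeff_eval_eq_eval_levelForm (le_tropP_hasseDeriv hg j) hz

lemma le_orderTop_eval (hg : (q : WithTop ℚ) ≤ tropP g ρ) (hz : z.orderTop = ρ) :
    (q : WithTop ℚ) ≤ (g.eval z).orderTop := by
  refine le_orderTop_iff_forall.mpr fun p hp => ?_
  have hp : p < q := WithTop.coe_lt_coe.mp hp
  rw [coeff_eval_eq_eval_levelForm ((WithTop.coe_le_coe.mpr hp.le).trans hg) hz,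
    levelForm_eq_zero_of_lt hg hp, eval_zero]

lemma lt_orderTop_eval (hg : (q : WithTop ℚ) ≤ tropP g ρ) (hz : z.orderTop = ρ)
    (hroot : (levelForm g ρ q).eval z.leadingCoeff = 0) :
    (q : WithTop ℚ) < (g.eval z).orderTop :=
  (le_orderTop_eval hg hz).lt_of_ne fun h =>
    coeff_orderTop_ne h.symm (by rw [coeff_eval_eq_eval_levelForm hg hz, hroot])

end Evaluation

/-- The `ρ` for which `min_i (o(g_i) + i ρ)` is attained at `i = 0` and at some `i > 0`
(junk value `0` when `g` is constant). -/
def newtonSlope (g : K[X]) : ℚ :=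
  if h : (g.support.erase 0).Nonempty then
    (g.support.erase 0).sup' h fun j => ((g.coeff 0).order - (g.coeff j).order) / j
  else 0

lemma div_le_newtonSlope {g : K[X]} {j : ℕ} (hj : j ∈ g.support.erase 0) :
    ((g.coeff 0).order - (g.coeff j).order) / j ≤ newtonSlope g := by
  rw [newtonSlope, dif_pos ⟨j, hj⟩]
  exact Finset.le_sup' (fun j : ℕ => ((g.coeff 0).order - (g.coeff j).order) / j) hj

lemma lt_newtonSlope_taylor {g : K[X]} {ρ q : ℚ} (hg : (q : WithTop ℚ) ≤ tropP g ρ)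
    (hdeg : 0 < (levelForm g ρ q).natDegree) {z : K} (hz : z.orderTop = ρ)
    (hroot : (levelForm g ρ q).eval z.leadingCoeff = 0) (hgz : g.eval z ≠ 0) :
    ρ < newtonSlope (taylor z g) := by
  set j := (levelForm g ρ q).natDegree
  have hcoeff : ((taylor z g).coeff j).coeff (q - j * ρ) ≠ 0 := by
    rw [coeff_coeff_taylor hg hz, coeff_taylor_natDegree]
    exact leadingCoeff_ne_zero.mpr (ne_zero_of_natDegree_gt hdeg)
  have hj : j ∈ (taylor z g).support.erase 0 :=
    Finset.mem_erase.mpr ⟨hdeg.ne', mem_support_iff.mpr (ne_zero_of_coeff_ne_zero hcoeff)⟩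
  have hj_order : ((taylor z g).coeff j).order ≤ q - j * ρ := order_le_of_coeff_ne_zero hcoeff
  have h0_order : q < ((taylor z g).coeff 0).order := by
    rw [taylor_coeff_zero, ← WithTop.coe_lt_coe, order_eq_orderTop_of_ne_zero hgz]
    exact lt_orderTop_eval hg hz hroot
  refine lt_of_lt_of_le ?_ (div_le_newtonSlope hj)
  rw [lt_div_iff₀ (by exact_mod_cast hdeg)]
  linarith

lemma exists_ne_zero_isRoot {k : Type*} [Field k] [IsAlgClosed k] {p : k[X]}
    (hdeg : 0 < p.natDegree) (h0 : p.coeff 0 ≠ 0) : ∃ c ≠ 0, p.IsRoot c := by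
  obtain ⟨c, hc⟩ := IsAlgClosed.exists_root p (natDegree_pos_iff_degree_pos.mp hdeg).ne'
  exact ⟨c, fun hc0 => h0 (by rwa [hc0, IsRoot, ← coeff_zero_eq_eval_zero] at hc), hc⟩

def newtonForm (g : K[X]) : ℂ[X] := levelForm g (newtonSlope g) (g.coeff 0).order

section NewtonSlope

variable {g : K[X]}

lemma le_tropP_newtonSlope (h0 : g.coeff 0 ≠ 0) :
    ((g.coeff 0).order : WithTop ℚ) ≤ tropP g (newtonSlope g) := by
  refine le_tropP_iff.mpr fun i => ?_
  rcases eq_or_ne i 0 with rfl | hi0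
  · simp [order_eq_orderTop_of_ne_zero h0]
  by_cases hi : g.coeff i = 0
  · simp [hi]
  have := div_le_newtonSlope (Finset.mem_erase.mpr ⟨hi0, mem_support_iff.mpr hi⟩)
  rw [div_le_iff₀ (by positivity)] at this
  rw [← order_eq_orderTop_of_ne_zero hi, WithTop.coe_le_coe]
  linarith

lemma exists_orderTop_coeff_eq_newtonSlope (hdeg : 0 < g.natDegree) :
    ∃ j ≠ 0, (g.coeff j).orderTop = ↑((g.coeff 0).order - j * newtonSlope g) := by
  have hne : (g.support.erase 0).Nonempty :=
    ⟨g.natDegree, Finset.mem_erase.mpr ⟨hdeg.ne', natDegree_mem_support_of_nonzero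
      (ne_zero_of_natDegree_gt hdeg)⟩⟩
  obtain ⟨j, hj, hmax⟩ := Finset.exists_mem_eq_sup' hne
    fun j : ℕ => ((g.coeff 0).order - (g.coeff j).order) / j
  obtain ⟨hj0, hjs⟩ := Finset.mem_erase.mp hj
  refine ⟨j, hj0, ?_⟩
  rw [← order_eq_orderTop_of_ne_zero (mem_support_iff.mp hjs), WithTop.coe_eq_coe, newtonSlope,
    dif_pos hne, hmax, mul_div_cancel₀ _ (by exact_mod_cast hj0)]
  ring

lemma natDegree_newtonForm_pos (h0 : g.coeff 0 ≠ 0) (hdeg : 0 < g.natDegree) :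
    0 < (newtonForm g).natDegree := by
  obtain ⟨j, hj0, hj⟩ := exists_orderTop_coeff_eq_newtonSlope hdeg
  refine natDegree_levelForm_pos hj0.symm ?_ hj
  simp [order_eq_orderTop_of_ne_zero h0]

lemma exists_ne_zero_isRoot_newtonForm (h0 : g.coeff 0 ≠ 0) (hdeg : 0 < g.natDegree) :
    ∃ c ≠ 0, (newtonForm g).IsRoot c := by
  refine exists_ne_zero_isRoot (natDegree_newtonForm_pos h0 hdeg) ?_
  rw [newtonForm, coeff_levelForm_of_orderTop_eq (by simp [order_eq_orderTop_of_ne_zero h0])]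
  exact HahnSeries.leadingCoeff_ne_zero.mpr h0

end NewtonSlope

/-- `y - x` starts with a root of the initial form of `f (x + X)` along the first edge of its
Newton polygon. -/
structure NewtonStep (f : K[X]) (x y : K) : Prop where
  eval_ne_zero : f.eval x ≠ 0
  orderTop_sub : (y - x).orderTop = newtonSlope (taylor x f)
  isRoot : (newtonForm (taylor x f)).IsRoot (y - x).leadingCoeff

namespace NewtonStep

variable {f : K[X]} {x y z : K}

lemma irrefl : ¬ NewtonStep f x x := fun h => by
  simpa using h.orderTop_sub

lemma coeff_eq (h : NewtonStep f x y) {q : ℚ} (hq : q < newtonSlope (taylor x f)) :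
    x.coeff q = y.coeff q := by
  have := coeff_eq_zero_of_lt_orderTop (h.orderTop_sub ▸ WithTop.coe_lt_coe.mpr hq)
  rwa [HahnSeries.coeff_sub, sub_eq_zero, eq_comm] at this

lemma of_lt_orderTop (h : NewtonStep f x y)
    (hz : ↑(newtonSlope (taylor x f)) < (z - y).orderTop) : NewtonStep f x z := by
  rw [← h.orderTop_sub] at hz
  have hzx : z - x = (y - x) + (z - y) := by abel
  refine ⟨h.eval_ne_zero, ?_, ?_⟩
  · rw [hzx, orderTop_add_eq_left hz, h.orderTop_sub]
  · rw [hzx, leadingCoeff_add_eq_left hz]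
    exact h.isRoot

lemma newtonSlope_lt (hf : 0 < f.natDegree) (h : NewtonStep f x y) (hy : f.eval y ≠ 0) :
    newtonSlope (taylor x f) < newtonSlope (taylor y f) := by
  have h0 : (taylor x f).coeff 0 ≠ 0 := by rw [taylor_coeff_zero]; exact h.eval_ne_zero
  have hdeg : 0 < (taylor x f).natDegree := by rwa [natDegree_taylor]
  have := lt_newtonSlope_taylor (le_tropP_newtonSlope h0) (natDegree_newtonForm_pos h0 hdeg)
    h.orderTop_sub h.isRoot (by rwa [taylor_eval, sub_add_cancel])
  rwa [taylor_taylor, sub_add_cancel] at this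

lemma trans (hf : 0 < f.natDegree) (hxy : NewtonStep f x y) (hyz : NewtonStep f y z) :
    NewtonStep f x z :=
  hxy.of_lt_orderTop <| by
    rw [hyz.orderTop_sub]
    exact_mod_cast hxy.newtonSlope_lt hf hyz.eval_ne_zero

end NewtonStep

open Relation

lemma coeff_eq_of_reflGen_newtonStep {f : K[X]} {x y : K} (h : ReflGen (NewtonStep f) x y)
    {q : ℚ} (hq : q < newtonSlope (taylor x f)) : x.coeff q = y.coeff q := by
  cases h with
  | refl => rfl
  | single h => exact h.coeff_eq hq

section Zorn

variable {f : K[X]} (hf : 0 < f.natDegree)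
include hf

lemma exists_newtonStep {x : K} (hx : f.eval x ≠ 0) : ∃ y, NewtonStep f x y := by
  have h0 : (taylor x f).coeff 0 ≠ 0 := by rw [taylor_coeff_zero]; exact hx
  obtain ⟨c, hc0, hc⟩ :=
    exists_ne_zero_isRoot_newtonForm h0 (by rwa [natDegree_taylor] : 0 < (taylor x f).natDegree)
  refine ⟨x + single (newtonSlope (taylor x f)) c, hx, ?_, ?_⟩ <;>
    rw [add_sub_cancel_left]
  · exact orderTop_single hc0
  · rwa [leadingCoeff_of_single]

lemma exists_forall_reflGen_newtonStep_of_isChain {c : Set K}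
    (hc : IsChain (ReflGen (NewtonStep f)) c) :
    ∃ ub, ∀ a ∈ c, ReflGen (NewtonStep f) a ub := by
  by_cases htop : ∃ t ∈ c, ∀ a ∈ c, ReflGen (NewtonStep f) a t
  · obtain ⟨t, -, ht⟩ := htop
    exact ⟨t, ht⟩
  push Not at htop
  have hsucc : ∀ a ∈ c, ∃ b ∈ c, NewtonStep f a b := fun a ha => by
    obtain ⟨b, hb, hba⟩ := htop a ha
    rcases hc.total ha hb with (_ | hab) | hba'
    · exact absurd ReflGen.refl hba
    · exact ⟨b, hb, hab⟩
    · exact absurd hba' hba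
  have hcompat : ∀ a b : c, ∀ q, q < newtonSlope (taylor (a : K) f) →
      q < newtonSlope (taylor (b : K) f) → (a : K).coeff q = (b : K).coeff q := by
    intro a b q ha hb
    rcases hc.total a.2 b.2 with hab | hba
    · exact coeff_eq_of_reflGen_newtonStep hab ha
    · exact (coeff_eq_of_reflGen_newtonStep hba hb).symm
  obtain ⟨L, hL⟩ := exists_coeff_eq_of_forall_coeff_eq (fun a : c => (a : K)) _ hcompat
  refine ⟨L, fun a ha => .single ?_⟩
  obtain ⟨b, hb, hab⟩ := hsucc a ha
  obtain ⟨_, -, hbs⟩ := hsucc b hb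
  have hLb : (newtonSlope (taylor b f) : WithTop ℚ) ≤ (L - b).orderTop :=
    le_orderTop_iff_forall.mpr fun q hq => by
      rw [HahnSeries.coeff_sub, hL ⟨b, hb⟩ q (WithTop.coe_lt_coe.mp hq), sub_self]
  exact hab.of_lt_orderTop
    ((WithTop.coe_lt_coe.mpr (hab.newtonSlope_lt hf hbs.eval_ne_zero)).trans_le hLb)

theorem exists_reflGen_newtonStep_eval_eq_zero (x₀ : K) :
    ∃ m, ReflGen (NewtonStep f) x₀ m ∧ f.eval m = 0 := by
  have trans : ∀ {x y z : K}, ReflGen (NewtonStep f) x y → ReflGen (NewtonStep f) y z →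
      ReflGen (NewtonStep f) x z := by
    intro x y z hxy hyz
    rcases hxy with _ | hxy
    · exact hyz
    rcases hyz with _ | hyz
    · exact .single hxy
    · exact .single (hxy.trans hf hyz)
  let S := {y // ReflGen (NewtonStep f) x₀ y}
  have : Nonempty S := ⟨⟨x₀, .refl⟩⟩
  have hbdd : ∀ c : Set S, IsChain (fun a b : S => ReflGen (NewtonStep f) a.1 b.1) c →
      c.Nonempty → ∃ ub : S, ∀ a ∈ c, ReflGen (NewtonStep f) a.1 ub.1 := by
    rintro c hc ⟨a, ha⟩
    obtain ⟨ub, hub⟩ := exists_forall_reflGen_newtonStep_of_isChain hf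
      (hc.image_of_map_rel _ _ Subtype.val fun _ _ h => h)
    exact ⟨⟨ub, trans a.2 (hub a ⟨a, ha, rfl⟩)⟩, fun b hb => hub b ⟨b, hb, rfl⟩⟩
  obtain ⟨m, hm⟩ := exists_maximal_of_nonempty_chains_bounded hbdd trans
  refine ⟨m.1, m.2, by_contra fun hm0 => ?_⟩
  obtain ⟨y, hy⟩ := exists_newtonStep hf hm0
  rcases hm ⟨y, trans m.2 (.single hy)⟩ (.single hy) with _ | hym
  · exact NewtonStep.irrefl hy
  · exact NewtonStep.irrefl (hy.trans hf hym)

end Zorn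

theorem newton_puiseux_univariate_general (f : Polynomial K) (r : ℚ)
    (htwice : ∃ i ∈ f.support, ∃ j ∈ f.support, i ≠ j ∧
      (wtP f r i : WithTop ℚ) = tropP f r ∧ (wtP f r j : WithTop ℚ) = tropP f r)
    (γ : ℂ) (hγ : γ ≠ 0) (hroot : (initFormP f r).eval γ = 0) :
    ∃ x : K, x ≠ 0 ∧ f.eval x = 0 ∧ x.order = r ∧ pc x = γ := by
  obtain ⟨i, hi, j, hj, hij, hwi, hwj⟩ := htwice
  have htrop : tropP f r = wtP f r i := hwi.symm
  have hdeg : 0 < (levelForm f r (wtP f r i)).natDegree :=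
    natDegree_levelForm_pos hij (orderTop_coeff_eq_of_wtP_eq hi rfl)
      (orderTop_coeff_eq_of_wtP_eq hj (by exact_mod_cast hwj.trans htrop))
  have hf : 0 < f.natDegree := by
    have := le_natDegree_of_mem_supp i hi
    have := le_natDegree_of_mem_supp j hj
    omega
  have hx₀ : (single r γ : K).orderTop = r := orderTop_single hγ
  obtain ⟨m, hm, hfm⟩ := exists_reflGen_newtonStep_eval_eq_zero hf (single r γ)
  suffices m.orderTop = r ∧ m.leadingCoeff = γ from
    ⟨m, orderTop_ne_top.mp (this.1 ▸ WithTop.coe_ne_top), hfm, order_eq_of_orderTop_eq this.1,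
      (pc_eq_leadingCoeff m).trans this.2⟩
  cases hm with
  | refl => exact ⟨hx₀, leadingCoeff_of_single⟩
  | single hstep =>
    have hlt : r < newtonSlope (taylor (single r γ) f) :=
      lt_newtonSlope_taylor htrop.ge hdeg hx₀
        (by rwa [leadingCoeff_of_single, ← initFormP_eq_levelForm htrop]) hstep.eval_ne_zero
    have hsmall : (single r γ : K).orderTop < (m - single r γ).orderTop := by
      rw [hstep.orderTop_sub, hx₀]
      exact_mod_cast hlt
    rw [← add_sub_cancel (single r γ) m]
    exact ⟨(orderTop_add_eq_left hsmall).trans hx₀,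
      (leadingCoeff_add_eq_left hsmall).trans leadingCoeff_of_single⟩

/-- Univariate Newton–Puiseux with principal terms: if the minimum defining
`tropP f r` is attained at two distinct indices and `γ ∈ ℂ*` is a root of the
initial form `f̃_r`, then `f` has a root `x ∈ K*` with `o(x) = r` and
`pc(x) = γ`. -/
theorem newton_puiseux_univariate (f : Polynomial K) (hf : f ≠ 0) (r : ℚ)
    (htwice : ∃ i ∈ f.support, ∃ j ∈ f.support, i ≠ j ∧
      (wtP f r i : WithTop ℚ) = tropP f r ∧ (wtP f r j : WithTop ℚ) = tropP f r)
    (γ : ℂ) (hγ : γ ≠ 0) (hroot : (initFormP f r).eval γ = 0) :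
    ∃ x : K, x ≠ 0 ∧ f.eval x = 0 ∧ x.order = r ∧ pc x = γ :=
  newton_puiseux_univariate_general f r htwice γ hγ hroot
end
end

section
/- Let f̃ = Σ_{i∈I} ã_i x^i ∈ K[x₁,…,x_n] be nonzero with tropicalization f(x) = min_i {o(ã_i) + i·x}, and let b ∈ ℚⁿ. The following are equivalent: (1) the minimum f(b) is attained by at least two distinct indices i ∈ I with ã_i ≠ 0 (i.e., b ∈ 𝒯(f)); (2) the initial form f̃_b ∈ ℂ[x₁,…,x_n] has at least two monomials; (3) f̃_b has a root in (ℂ*)ⁿ. -/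
noncomputable section

/-- The weight of the multi-index `i` of `f` at the point `b`:
`o(a_i) + i·b`. -/
def wt {n : ℕ} (f : MvPolynomial (Fin n) K) (b : Fin n → ℚ) (i : Fin n →₀ ℕ) : ℚ :=
  (f.coeff i).order + ∑ j, (i j : ℚ) * b j

/-- The tropicalization `f(b) = min_{i ∈ supp f} (o(a_i) + i·b)`, with value `⊤`
for the zero polynomial. -/
def trop {n : ℕ} (f : MvPolynomial (Fin n) K) (b : Fin n → ℚ) : WithTop ℚ :=
  f.support.inf fun i => (wt f b i : WithTop ℚ)

/-- The tropical hypersurface `𝒯(f)`: points where the minimum is attained at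
least twice. -/
def tropSet {n : ℕ} (f : MvPolynomial (Fin n) K) : Set (Fin n → ℚ) :=
  {b | ∃ i ∈ f.support, ∃ j ∈ f.support, i ≠ j ∧
    (wt f b i : WithTop ℚ) = trop f b ∧ (wt f b j : WithTop ℚ) = trop f b}

/-- The initial form `f̃_b ∈ ℂ[x]` of `f` at `b`. -/
def initForm {n : ℕ} (f : MvPolynomial (Fin n) K) (b : Fin n → ℚ) :
    MvPolynomial (Fin n) ℂ :=
  ∑ i ∈ f.support.filter fun i => (wt f b i : WithTop ℚ) = trop f b,
    MvPolynomial.monomial i (pc (f.coeff i))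

/-!
The initial form `f̃_b` is the sum of the monomials of `f` of minimal weight at `b`, each with a
nonzero principal coefficient, so its support is exactly the set of indices attaining the minimum
`f(b)`; this gives (1) ⇔ (2). A single nonzero monomial does not vanish on the torus, which gives
(3) ⇒ (2). For (2) ⇒ (3), the Kronecker substitution `x_m ↦ t ^ D ^ m`, with `D` exceeding every
exponent, maps distinct monomials to distinct powers of `t`, so it turns `f̃_b` into a univariate
polynomial with at least two monomials. Over an algebraically closed field such a polynomial is not
of the form `c t ^ k`, hence has a nonzero root.
-/

open Polynomial in
theorem Polynomial.exists_root_ne_zero_of_one_lt_card_support {k : Type*} [Field k] [IsAlgClosed k]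
    {P : k[X]} (h : 1 < P.support.card) : ∃ t : k, t ≠ 0 ∧ P.IsRoot t := by
  have hP : P ≠ 0 := by rintro rfl; simp at h
  by_contra! hroots
  have hzero : P.roots = Multiset.replicate P.roots.card 0 :=
    Multiset.eq_replicate_card.2 fun t ht => by
      by_contra ht0
      exact hroots t ht0 (mem_roots hP |>.1 ht)
  have hmonomial : C P.leadingCoeff * X ^ P.roots.card = P := by
    have := C_leadingCoeff_mul_prod_multiset_X_sub_C (IsAlgClosed.card_roots_eq_natDegree (p := P))
    rwa [hzero, Multiset.map_replicate, map_zero, sub_zero, Multiset.prod_replicate] at this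
  have := hmonomial ▸ card_support_C_mul_X_pow_le_one (c := P.leadingCoeff) (n := P.roots.card)
  omega

namespace MvPolynomial

theorem support_sum_monomial {R σ : Type*} [CommSemiring R] {S : Finset (σ →₀ ℕ)}
    {c : (σ →₀ ℕ) → R} (hc : ∀ i ∈ S, c i ≠ 0) : (∑ i ∈ S, monomial i (c i)).support = S := by
  classical
  ext j
  rw [mem_support_iff, coeff_sum]
  simp only [coeff_monomial, Finset.sum_ite_eq']
  exact ⟨fun h => by_contra fun hj => h (if_neg hj), fun hj => by simpa [hj] using hc j hj⟩

theorem eval_ne_zero_of_card_support_eq_one {R σ : Type*} [CommRing R] [IsDomain R]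
    {g : MvPolynomial σ R} (hg : g.support.card = 1) {γ : σ → R} (hγ : ∀ j, γ j ≠ 0) :
    eval γ g ≠ 0 := by
  obtain ⟨i, hi⟩ := Finset.card_eq_one.1 hg
  have hmonomial : monomial i (g.coeff i) = g := by
    simpa [hi] using support_sum_monomial_coeff g
  have hcoeff : g.coeff i ≠ 0 := mem_support_iff.1 (hi ▸ Finset.mem_singleton_self i)
  rw [← hmonomial, eval_monomial]
  exact mul_ne_zero hcoeff (Finset.prod_ne_zero_iff.2 fun m _ => pow_ne_zero _ (hγ m))

section Kronecker

variable {R : Type*} [CommRing R] {n : ℕ}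

/-- The exponent of `t` in the image of the monomial `x ^ i` under `x_m ↦ t ^ D ^ m`. -/
def kroneckerExponent (D : ℕ) (i : Fin n →₀ ℕ) : ℕ := ∑ m, i m * D ^ (m : ℕ)

theorem kroneckerExponent_injOn (D : ℕ) :
    Set.InjOn (kroneckerExponent (n := n) D) {i | ∀ m, i m < D} := by
  intro i hi j hj hij
  have hdigits : (fun m => (⟨i m, hi m⟩ : Fin D)) = fun m => ⟨j m, hj m⟩ :=
    finFunctionFinEquiv.injective <| Fin.ext <| by
      simpa [finFunctionFinEquiv_apply, kroneckerExponent] using hij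
  exact Finsupp.ext fun m => congrArg Fin.val (congrFun hdigits m)

theorem aeval_kronecker_monomial (D : ℕ) (i : Fin n →₀ ℕ) (c : R) :
    aeval (fun m : Fin n => (Polynomial.X : Polynomial R) ^ D ^ (m : ℕ)) (monomial i c) =
      Polynomial.C c * Polynomial.X ^ kroneckerExponent D i := by
  rw [aeval_monomial, Finsupp.prod_fintype _ _ (fun _ => pow_zero _), kroneckerExponent,
    ← Finset.prod_pow_eq_pow_sum]
  simp only [← pow_mul, mul_comm (D ^ _)]
  rfl

theorem eval_aeval_kronecker (D : ℕ) (g : MvPolynomial (Fin n) R) (t : R) :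
    (aeval (fun m : Fin n => (Polynomial.X : Polynomial R) ^ D ^ (m : ℕ)) g).eval t =
      eval (fun m : Fin n => t ^ D ^ (m : ℕ)) g := by
  rw [← Polynomial.coe_aeval_eq_eval, ← AlgHom.comp_apply, comp_aeval, ← coe_aeval_eq_eval]
  simp

theorem card_support_le_card_support_aeval_kronecker {D : ℕ} {g : MvPolynomial (Fin n) R}
    (hD : ∀ i ∈ g.support, ∀ m, i m < D) :
    g.support.card ≤
      (aeval (fun m : Fin n => (Polynomial.X : Polynomial R) ^ D ^ (m : ℕ)) g).support.card := by
  classical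
  have hinj : Set.InjOn (kroneckerExponent D) g.support :=
    (kroneckerExponent_injOn D).mono fun i hi => hD i hi
  have hcoeff : ∀ i ∈ g.support,
      (aeval (fun m : Fin n => (Polynomial.X : Polynomial R) ^ D ^ (m : ℕ)) g).coeff
        (kroneckerExponent D i) = g.coeff i := by
    intro i hi
    conv_lhs => rw [← support_sum_monomial_coeff g]
    rw [map_sum, Polynomial.finsetSum_coeff, Finset.sum_eq_single_of_mem i hi]
    · simp [aeval_kronecker_monomial]
    · intro j hj hji
      rw [aeval_kronecker_monomial, Polynomial.coeff_C_mul_X_pow,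
        if_neg fun h => hji (hinj hj hi h.symm)]
  rw [← Finset.card_image_of_injOn hinj]
  refine Finset.card_le_card fun k hk => ?_
  obtain ⟨i, hi, rfl⟩ := Finset.mem_image.1 hk
  rw [Polynomial.mem_support_iff, hcoeff i hi]
  exact mem_support_iff.1 hi

end Kronecker

theorem exists_eval_eq_zero_of_one_lt_card_support {k : Type*} [Field k] [IsAlgClosed k] {n : ℕ}
    {g : MvPolynomial (Fin n) k} (h : 1 < g.support.card) :
    ∃ γ : Fin n → k, (∀ j, γ j ≠ 0) ∧ eval γ g = 0 := by
  set D := g.totalDegree + 1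
  have hD : ∀ i ∈ g.support, ∀ m, i m < D := fun i hi m =>
    Nat.lt_succ_of_le ((monomial_le_degreeOf m hi).trans (degreeOf_le_totalDegree g m))
  obtain ⟨t, ht, hroot⟩ := Polynomial.exists_root_ne_zero_of_one_lt_card_support
    (h.trans_le (card_support_le_card_support_aeval_kronecker hD))
  refine ⟨fun m => t ^ D ^ (m : ℕ), fun m => pow_ne_zero _ ht, ?_⟩
  rw [← eval_aeval_kronecker]
  exact hroot

end MvPolynomial

section Tropical

variable {n : ℕ} (f : MvPolynomial (Fin n) K) (b : Fin n → ℚ)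

theorem pc_ne_zero {a : K} (ha : a ≠ 0) : pc a ≠ 0 :=
  HahnSeries.coeff_order_eq_zero.not.2 ha

theorem support_initForm :
    (initForm f b).support = f.support.filter fun i => (wt f b i : WithTop ℚ) = trop f b :=
  MvPolynomial.support_sum_monomial fun _ hi =>
    pc_ne_zero (MvPolynomial.mem_support_iff.1 (Finset.mem_filter.1 hi).1)

theorem mem_tropSet_iff_one_lt_card_support_initForm :
    b ∈ tropSet f ↔ 1 < (initForm f b).support.card := by
  rw [support_initForm, Finset.one_lt_card]
  simp only [Finset.mem_filter]
  constructor
  · rintro ⟨i, hi, j, hj, hij, hwi, hwj⟩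
    exact ⟨i, ⟨hi, hwi⟩, j, ⟨hj, hwj⟩, hij⟩
  · rintro ⟨i, ⟨hi, hwi⟩, j, ⟨hj, hwj⟩, hij⟩
    exact ⟨i, hi, j, hj, hij, hwi, hwj⟩

theorem support_initForm_nonempty (hf : f ≠ 0) :
    (initForm f b).support.Nonempty := by
  obtain ⟨i, hi, hmin⟩ := Finset.exists_mem_eq_inf f.support
    (MvPolynomial.support_nonempty.2 hf) fun i => (wt f b i : WithTop ℚ)
  exact ⟨i, support_initForm f b ▸ Finset.mem_filter.2 ⟨hi, hmin.symm⟩⟩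

end Tropical

/-- For a nonzero `f` and `b ∈ ℚⁿ`, the following are equivalent:
`b ∈ 𝒯(f)`; the initial form `f̃_b` has at least two monomials; and `f̃_b` has
a root in the complex torus `(ℂ*)ⁿ`. -/
theorem tropSet_iff_initForm (n : ℕ) (f : MvPolynomial (Fin n) K) (hf : f ≠ 0)
    (b : Fin n → ℚ) :
    (b ∈ tropSet f ↔ 1 < (initForm f b).support.card) ∧
    (b ∈ tropSet f ↔ ∃ γ : Fin n → ℂ, (∀ j, γ j ≠ 0) ∧
      MvPolynomial.eval γ (initForm f b) = 0) := by
  have h12 := mem_tropSet_iff_one_lt_card_support_initForm f b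
  refine ⟨h12, h12.trans ⟨MvPolynomial.exists_eval_eq_zero_of_one_lt_card_support, ?_⟩⟩
  rintro ⟨γ, hγ, hroot⟩
  by_contra hcard
  have hone : (initForm f b).support.card = 1 := by
    have := (support_initForm_nonempty f b hf).card_pos
    omega
  exact MvPolynomial.eval_ne_zero_of_card_support_eq_one hone hγ hroot
end
end

section
/- (Perturbation step.) Let f̃ ∈ K[x₁,…,x_n] and b ∈ ℚⁿ, γ ∈ (ℂ*)ⁿ with f̃(x t^b) = f̃_b(x) t^{f(b)} + O(t^{f(b)+ε}) for some ε > 0. Suppose f̃_b factors as f̃_b = (x₁−γ₁)^k·(x₂−γ₂)⋯(x_n−γ_n)·q(x₁,…,x_n) with q(γ₁, x₂,…,x_n) not identically zero. Then for g̃(x₂,…,x_n) = f̃((γ₁ + t^{ε/(2k)}) t^{b₁}, x₂,…,x_n), the initial form of g̃ at b' = (b₂,…,b_n) equals (x₂−γ₂)⋯(x_n−γ_n)·q(γ₁, x₂,…,x_n) up to a nonzero constant; in particular g̃_{b'}(γ₂,…,γ_n) = 0 and b' ∈ 𝒯(g). -/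
noncomputable section

/-- The result of substituting `x_j ↦ x_j t^{b_j}` in `f`. -/
def substT {n : ℕ} (f : MvPolynomial (Fin n) K) (b : Fin n → ℚ) :
    MvPolynomial (Fin n) K :=
  MvPolynomial.aeval
    (fun j => MvPolynomial.X j * MvPolynomial.C (HahnSeries.single (b j) 1)) f

/-- Substitution of a constant `c ∈ K` for the first variable. -/
def substFirst {n : ℕ} (f : MvPolynomial (Fin (n + 1)) K) (c : K) :
    MvPolynomial (Fin n) K :=
  Polynomial.eval (MvPolynomial.C c) (MvPolynomial.finSuccEquiv K n f)

/-- Substitution of a constant `c ∈ ℂ` for the first variable of a complex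
polynomial. -/
def substFirstC {n : ℕ} (p : MvPolynomial (Fin (n + 1)) ℂ) (c : ℂ) :
    MvPolynomial (Fin n) ℂ :=
  Polynomial.eval (MvPolynomial.C c) (MvPolynomial.finSuccEquiv ℂ n p)

/-!
Substituting `x₁ = (γ₁ + t^δ) t^{b₁}` with `δ = ε/(2k)` into
`f(x t^b) = f̃_b(x) t^{f(b)} + O(t^{f(b)+ε})` turns the factor `(x₁ - γ₁)^k` of `f̃_b` into
`t^{kδ} = t^{ε/2}` and `q(x₁, ·)` into `q(γ₁, ·) + O(t^δ)`. Hence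
`g(x' t^{b'}) = M(x') t^{f(b)+ε/2} + O(t^{f(b)+ε/2+δ})` with
`M = (x₂ - γ₂)⋯(xₙ - γₙ) q(γ₁, ·) ≠ 0`, and an expansion of this shape forces
`g(b') = f(b) + ε/2` and `g̃_{b'} = M`. As `M` vanishes at `(γ₂, …, γₙ)`, whose coordinates are
nonzero, it is not a monomial, so the minimum defining `g(b')` is attained at least twice.
-/

open MvPolynomial

namespace HahnSeries

variable {Γ R : Type*}

theorem le_orderTop_sum [AddCancelCommMonoid Γ] [LinearOrder Γ] [IsOrderedCancelAddMonoid Γ]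
    [Ring R] [IsDomain R] {ι : Type*} {s : Finset ι} {x : ι → HahnSeries Γ R} {w : WithTop Γ}
    (h : ∀ i ∈ s, w ≤ (x i).orderTop) : w ≤ (∑ i ∈ s, x i).orderTop := by
  simpa only [addVal_apply] using (addVal Γ R).map_le_sum (by simpa only [addVal_apply] using h)

theorem orderTop_eq_and_leadingCoeff_eq_of_lt_orderTop_sub_single [LinearOrder Γ] [AddCommGroup R]
    {x : HahnSeries Γ R} {g : Γ} {c : R} (hc : c ≠ 0)
    (h : (g : WithTop Γ) < (x - single g c).orderTop) :
    x.orderTop = g ∧ x.leadingCoeff = c := by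
  have hlt : (single g c).orderTop < (x - single g c).orderTop := by rwa [orderTop_single hc]
  rw [← add_sub_cancel (single g c) x, orderTop_add_eq_left hlt, leadingCoeff_add_eq_left hlt,
    orderTop_single hc, leadingCoeff_of_single]
  exact ⟨rfl, rfl⟩

theorem prod_single_one [AddCommMonoid Γ] [PartialOrder Γ]
    [IsOrderedCancelAddMonoid Γ] [CommSemiring R] {ι : Type*} (s : Finset ι) (r : ι → Γ) :
    ∏ i ∈ s, single (r i) (1 : R) = single (∑ i ∈ s, r i) 1 := by
  classical
  induction s using Finset.induction_on with
  | empty => simp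
  | insert a s ha ih =>
    rw [Finset.prod_insert ha, Finset.sum_insert ha, ih, single_mul_single, mul_one]

section Ring

variable [AddCancelCommMonoid Γ] [LinearOrder Γ] [IsOrderedCancelAddMonoid Γ]
  [CommRing R]

theorem orderTop_pow_nonneg {x : HahnSeries Γ R} (hx : 0 ≤ x.orderTop) (m : ℕ) :
    0 ≤ (x ^ m).orderTop :=
  le_trans (nsmul_nonneg hx m) orderTop_nsmul_le_orderTop_pow

theorem orderTop_sub_le_orderTop_pow_sub_pow [IsDomain R] {x y : HahnSeries Γ R}
    (hx : 0 ≤ x.orderTop) (hy : 0 ≤ y.orderTop) (m : ℕ) :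
    (x - y).orderTop ≤ (x ^ m - y ^ m).orderTop := by
  rw [← geom_sum₂_mul, orderTop_mul]
  refine le_add_of_nonneg_left (le_orderTop_sum fun i _ => ?_)
  rw [orderTop_mul]
  exact add_nonneg (orderTop_pow_nonneg hx i) (orderTop_pow_nonneg hy _)

end Ring

end HahnSeries

namespace MvPolynomial

variable {R σ : Type*} [CommRing R]

theorem X_sub_C_ne_zero [Nontrivial R] (j : σ) (a : R) : X j - C a ≠ 0 := fun h => by
  simpa using congrArg (eval fun _ => a + 1) h

theorem exists_mem_support_ne_of_eval_eq_zero [IsDomain R] {p : MvPolynomial σ R} (hp : p ≠ 0)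
    {x : σ → R} (hx : ∀ j, x j ≠ 0) (heval : eval x p = 0) :
    ∃ i ∈ p.support, ∃ j ∈ p.support, i ≠ j := by
  obtain ⟨i, hi⟩ := support_nonempty.2 hp
  by_contra! h
  have hmono : p = monomial i (p.coeff i) := by
    conv_lhs => rw [p.as_sum]
    exact Finset.sum_eq_single i (fun j hj hji => (hji (h j hj i hi)).elim) (fun h' => (h' hi).elim)
  rw [hmono, eval_monomial] at heval
  exact mul_ne_zero (mem_support_iff.1 hi)
    (Finset.prod_ne_zero_iff.2 fun l _ => pow_ne_zero _ (hx l)) heval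

end MvPolynomial

section EvalFirst

variable {R : Type*} [CommSemiring R] {n : ℕ}

def evalFirst (c : R) : MvPolynomial (Fin (n + 1)) R →ₐ[R] MvPolynomial (Fin n) R :=
  aeval (Fin.cons (C c) X)

@[simp] theorem evalFirst_X_zero (c : R) : evalFirst (n := n) c (X 0) = C c := by
  simp [evalFirst]

@[simp] theorem evalFirst_X_succ (c : R) (j : Fin n) : evalFirst c (X j.succ) = X j := by
  simp [evalFirst]

@[simp] theorem evalFirst_C (c a : R) : evalFirst (n := n) c (C a) = C a :=
  (evalFirst c).commutes a

theorem eval_C_finSuccEquiv (c : R) (p : MvPolynomial (Fin (n + 1)) R) :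
    Polynomial.eval (C c) (finSuccEquiv R n p) = evalFirst c p := by
  have : ((Polynomial.aeval (C c)).restrictScalars R).comp (finSuccEquiv R n).toAlgHom =
      evalFirst (n := n) c := by
    ext i : 1
    cases i using Fin.cases <;> simp [finSuccEquiv_X_zero, finSuccEquiv_X_succ]
  exact DFunLike.congr_fun this p

theorem evalFirst_monomial (c : R) (j : Fin (n + 1) →₀ ℕ) (a : R) :
    evalFirst c (monomial j a) = monomial (Finsupp.tail j) (a * c ^ j 0) := by
  rw [evalFirst, aeval_monomial, algebraMap_eq, Finsupp.prod_fintype _ _ fun _ => pow_zero _,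
    Fin.prod_univ_succ, monomial_eq, Finsupp.prod_fintype _ _ fun _ => pow_zero _]
  simp only [Fin.cons_zero, Fin.cons_succ, Finsupp.tail_apply, map_mul, map_pow]
  ring

theorem evalFirst_eq_sum (c : R) (p : MvPolynomial (Fin (n + 1)) R) :
    evalFirst c p = ∑ j ∈ p.support, monomial (Finsupp.tail j) (p.coeff j * c ^ j 0) := by
  conv_lhs => rw [p.as_sum, map_sum]
  simp only [evalFirst_monomial]

theorem map_evalFirst {S : Type*} [CommSemiring S] (φ : R →+* S) (c : R)
    (p : MvPolynomial (Fin (n + 1)) R) : map φ (evalFirst c p) = evalFirst (φ c) (map φ p) := by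
  have : (map φ).comp (evalFirst (n := n) c).toRingHom =
      (evalFirst (φ c)).toRingHom.comp (map φ) := by
    ext i : 1
    · ext a
      simp
    · cases i using Fin.cases <;> simp
  exact DFunLike.congr_fun this p

end EvalFirst

section Tropical

open HahnSeries

theorem substT_monomial {n : ℕ} (b : Fin n → ℚ) (j : Fin n →₀ ℕ) (a : K) :
    substT (monomial j a) b = monomial j (a * single (∑ l, (j l : ℚ) * b l) 1) := by
  rw [substT, aeval_monomial, Finsupp.prod_fintype _ _ fun _ => pow_zero _]
  simp only [mul_pow, Finset.prod_mul_distrib, ← map_pow, ← map_prod, single_pow, one_pow,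
    nsmul_eq_mul, prod_single_one]
  rw [monomial_eq, Finsupp.prod_fintype _ _ fun _ => pow_zero _, algebraMap_eq, map_mul]
  ring

theorem coeff_substT {n : ℕ} (f : MvPolynomial (Fin n) K) (b : Fin n → ℚ) (i : Fin n →₀ ℕ) :
    (substT f b).coeff i = f.coeff i * single (∑ l, (i l : ℚ) * b l) 1 := by
  classical
  have hsum : substT f b = ∑ j ∈ f.support, substT (monomial j (f.coeff j)) b := by
    conv_lhs => rw [f.as_sum]
    exact map_sum (aeval _) _ _
  simp only [hsum, substT_monomial, MvPolynomial.coeff_sum, coeff_monomial, Finset.sum_ite_eq',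
    mem_support_iff, ite_not]
  split_ifs with h <;> simp [h]

variable {n : ℕ} (f : MvPolynomial (Fin n) K) (b : Fin n → ℚ)

theorem orderTop_coeff_substT {i : Fin n →₀ ℕ} (hi : f.coeff i ≠ 0) :
    ((substT f b).coeff i).orderTop = wt f b i := by
  rw [coeff_substT, orderTop_mul, orderTop_single one_ne_zero,
    ← order_eq_orderTop_of_ne_zero hi, wt, WithTop.coe_add]

theorem leadingCoeff_coeff_substT (i : Fin n →₀ ℕ) :
    ((substT f b).coeff i).leadingCoeff = pc (f.coeff i) := by
  rw [coeff_substT, leadingCoeff_mul, leadingCoeff_of_single, mul_one, pc, leadingCoeff_eq]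

theorem mem_support_of_mem_support_initForm {i : Fin n →₀ ℕ} (hi : i ∈ (initForm f b).support) :
    i ∈ f.support ∧ (wt f b i : WithTop ℚ) = trop f b := by
  by_contra h
  refine mem_support_iff.1 hi ?_
  rw [initForm, MvPolynomial.coeff_sum]
  refine Finset.sum_eq_zero fun j hj => ?_
  rw [coeff_monomial, if_neg]
  rintro rfl
  exact h (Finset.mem_filter.1 hj)

theorem mem_tropSet_of_mem_support_initForm {i j : Fin n →₀ ℕ} (hi : i ∈ (initForm f b).support)
    (hj : j ∈ (initForm f b).support) (hij : i ≠ j) : b ∈ tropSet f :=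
  have hi := mem_support_of_mem_support_initForm f b hi
  have hj := mem_support_of_mem_support_initForm f b hj
  ⟨i, hi.1, j, hj.1, hij, hi.2, hj.2⟩

theorem wt_eq_and_pc_eq_of_lt_orderTop_sub_single {i : Fin n →₀ ℕ} {W : ℚ} {c : ℂ} (hc : c ≠ 0)
    (h : (W : WithTop ℚ) < ((substT f b).coeff i - single W c).orderTop) :
    f.coeff i ≠ 0 ∧ wt f b i = W ∧ pc (f.coeff i) = c := by
  obtain ⟨hord, hlc⟩ := orderTop_eq_and_leadingCoeff_eq_of_lt_orderTop_sub_single hc h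
  have hf : f.coeff i ≠ 0 := fun h0 => by simp [coeff_substT, h0] at hord
  refine ⟨hf, ?_, (leadingCoeff_coeff_substT f b i).symm.trans hlc⟩
  exact_mod_cast (orderTop_coeff_substT f b hf).symm.trans hord

end Tropical

/-- The paper's `P = O(t^w)`. -/
def IsBigOT {σ : Type*} (w : WithTop ℚ) (P : MvPolynomial σ K) : Prop :=
  ∀ i, w ≤ (P.coeff i).orderTop

section BigOT

open HahnSeries

namespace IsBigOT

variable {σ : Type*} {w w₁ w₂ : WithTop ℚ} {P Q : MvPolynomial σ K}

theorem mono (hP : IsBigOT w₁ P) (h : w₂ ≤ w₁) : IsBigOT w₂ P :=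
  fun i => h.trans (hP i)

theorem add (hP : IsBigOT w P) (hQ : IsBigOT w Q) : IsBigOT w (P + Q) :=
  fun i => (le_min (hP i) (hQ i)).trans (coeff_add i P Q ▸ min_orderTop_le_orderTop_add)

theorem mul (hP : IsBigOT w₁ P) (hQ : IsBigOT w₂ Q) : IsBigOT (w₁ + w₂) (P * Q) := fun i => by
  classical
  rw [MvPolynomial.coeff_mul]
  exact le_orderTop_sum fun x _ => (orderTop_mul (P.coeff x.1) (Q.coeff x.2)).symm ▸
    add_le_add (hP x.1) (hQ x.2)

theorem sum {ι : Type*} {s : Finset ι} {P : ι → MvPolynomial σ K} (h : ∀ j ∈ s, IsBigOT w (P j)) :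
    IsBigOT w (∑ j ∈ s, P j) := fun i => by
  rw [MvPolynomial.coeff_sum]
  exact le_orderTop_sum fun j hj => h j hj i

end IsBigOT

theorem isBigOT_monomial {σ : Type*} {w : WithTop ℚ} (j : σ →₀ ℕ) {a : K} (ha : w ≤ a.orderTop) :
    IsBigOT w (monomial j a) := fun i => by
  classical
  rw [coeff_monomial]
  split_ifs
  exacts [ha, by simp]

theorem isBigOT_C_single {σ : Type*} (W : ℚ) : IsBigOT W (C (single W 1) : MvPolynomial σ K) :=
  fun i => by
  classical
  rw [coeff_C]
  split_ifs
  exacts [orderTop_single_le, by simp]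

theorem isBigOT_map_C {σ : Type*} (p : MvPolynomial σ ℂ) :
    IsBigOT 0 (map (HahnSeries.C : ℂ →+* K) p) := fun i => by
  rw [coeff_map, HahnSeries.C_apply]
  exact orderTop_single_le

theorem isBigOT_sub_C_single_mul_map_C_iff {σ : Type*} {w : WithTop ℚ} {P : MvPolynomial σ K}
    {W : ℚ} {M : MvPolynomial σ ℂ} :
    IsBigOT w (P - C (single W 1) * map HahnSeries.C M) ↔
      ∀ i, w ≤ (P.coeff i - single W (M.coeff i)).orderTop := by
  simp only [IsBigOT, coeff_sub, coeff_C_mul, coeff_map, HahnSeries.C_apply, single_mul_single,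
    add_zero, one_mul]

namespace IsBigOT

variable {n : ℕ} {w : WithTop ℚ} {P : MvPolynomial (Fin (n + 1)) K} {u c : K}

theorem evalFirst_sub_evalFirst (hP : IsBigOT 0 P) (hu : 0 ≤ u.orderTop) (hc : 0 ≤ c.orderTop) :
    IsBigOT (u - c).orderTop (evalFirst u P - evalFirst c P) := by
  rw [evalFirst_eq_sum, evalFirst_eq_sum, ← Finset.sum_sub_distrib (G := MvPolynomial (Fin n) K)]
  simp only [← map_sub, ← mul_sub]
  refine sum fun j _ => isBigOT_monomial _ ?_
  rw [orderTop_mul]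
  exact le_add_of_nonneg_of_le (hP j) (orderTop_sub_le_orderTop_pow_sub_pow hu hc _)

theorem evalFirst (hP : IsBigOT w P) (hu : 0 ≤ u.orderTop) : IsBigOT w (evalFirst u P) := by
  rw [evalFirst_eq_sum]
  refine sum fun j _ => isBigOT_monomial _ ?_
  rw [orderTop_mul]
  exact le_add_of_le_of_nonneg (hP j) (orderTop_pow_nonneg hu _)

end IsBigOT

theorem trop_eq_and_initForm_eq_of_isBigOT {n : ℕ} {g : MvPolynomial (Fin n) K} {b : Fin n → ℚ}
    {W δ : ℚ} (hδ : 0 < δ) {M : MvPolynomial (Fin n) ℂ} (hM : M ≠ 0)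
    (h : IsBigOT ↑(W + δ) (substT g b - C (single W 1) * map HahnSeries.C M)) :
    trop g b = W ∧ initForm g b = M := by
  have hlt (i) : (W : WithTop ℚ) < ((substT g b).coeff i - single W (M.coeff i)).orderTop :=
    lt_of_lt_of_le (mod_cast lt_add_of_pos_right W hδ) (isBigOT_sub_C_single_mul_map_C_iff.1 h i)
  have hon (i) (hi : M.coeff i ≠ 0) := wt_eq_and_pc_eq_of_lt_orderTop_sub_single g b hi (hlt i)
  have hoff (i) (hi : M.coeff i = 0) (hg : g.coeff i ≠ 0) : W < wt g b i := by
    have := hlt i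
    rwa [hi, map_zero, sub_zero, orderTop_coeff_substT g b hg, WithTop.coe_lt_coe] at this
  have htrop : trop g b = W := by
    obtain ⟨i₀, hi₀⟩ := support_nonempty.2 hM
    obtain ⟨hg₀, hw₀, -⟩ := hon i₀ (mem_support_iff.1 hi₀)
    refine le_antisymm (hw₀ ▸ Finset.inf_le (mem_support_iff.2 hg₀)) (Finset.le_inf fun i hi => ?_)
    by_cases hMi : M.coeff i = 0
    · exact_mod_cast (hoff i hMi (mem_support_iff.1 hi)).le
    · exact_mod_cast (hon i hMi).2.1.ge
  have hfilter : g.support.filter (fun i => (wt g b i : WithTop ℚ) = trop g b) = M.support := by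
    ext i
    simp only [Finset.mem_filter, mem_support_iff, htrop, WithTop.coe_eq_coe]
    exact ⟨fun ⟨hg, hw⟩ hMi => (hoff i hMi hg).ne' hw, fun hMi => ⟨(hon i hMi).1, (hon i hMi).2.1⟩⟩
  refine ⟨htrop, ?_⟩
  rw [initForm, hfilter]
  conv_rhs => rw [← support_sum_monomial_coeff M]
  exact Finset.sum_congr rfl fun i hi => by rw [(hon i (mem_support_iff.1 hi)).2.2]

end BigOT

theorem substFirst_eq_evalFirst {n : ℕ} (f : MvPolynomial (Fin (n + 1)) K) (c : K) :
    substFirst f c = evalFirst c f :=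
  eval_C_finSuccEquiv c f

theorem substFirstC_eq_evalFirst {n : ℕ} (p : MvPolynomial (Fin (n + 1)) ℂ) (c : ℂ) :
    substFirstC p c = evalFirst c p :=
  eval_C_finSuccEquiv c p

theorem substT_evalFirst {n : ℕ} (f : MvPolynomial (Fin (n + 1)) K) (b : Fin (n + 1) → ℚ) (u : K) :
    substT (evalFirst (u * HahnSeries.single (b 0) 1) f) (b ∘ Fin.succ) =
      evalFirst u (substT f b) := by
  have : (aeval fun j => X j * C (HahnSeries.single ((b ∘ Fin.succ) j) 1)).comp
      (evalFirst (n := n) (u * HahnSeries.single (b 0) 1)) =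
      (evalFirst u).comp (aeval fun j => X j * C (HahnSeries.single (b j) 1)) := by
    ext i : 1
    cases i using Fin.cases <;> simp [evalFirst, algebraMap_eq]
  exact DFunLike.congr_fun this f

theorem evalFirst_map_C_factored {n k : ℕ} (γ : Fin (n + 1) → ℂ) (q : MvPolynomial (Fin (n + 1)) ℂ)
    (d : K) :
    evalFirst (HahnSeries.C (γ 0) + d) (map HahnSeries.C
        ((X 0 - C (γ 0)) ^ k * (∏ j : Fin n, (X j.succ - C (γ j.succ))) * q)) =
      C (d ^ k) * map HahnSeries.C (∏ j : Fin n, (X j - C (γ j.succ))) *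
        evalFirst (HahnSeries.C (γ 0) + d) (map HahnSeries.C q) := by
  simp

theorem isBigOT_substT_evalFirst_sub {n k : ℕ} {f : MvPolynomial (Fin (n + 1)) K}
    {b : Fin (n + 1) → ℚ} {v δ : ℚ} (hδ : 0 ≤ δ) {γ : Fin (n + 1) → ℂ}
    {q : MvPolynomial (Fin (n + 1)) ℂ}
    (hO : IsBigOT ↑(v + (k + 1) * δ)
      (substT f b - C (HahnSeries.single v 1) * map HahnSeries.C (initForm f b)))
    (hfact : initForm f b = (X 0 - C (γ 0)) ^ k * (∏ j : Fin n, (X j.succ - C (γ j.succ))) * q) :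
    IsBigOT ↑(v + k * δ + δ)
      (substT (evalFirst ((HahnSeries.single 0 (γ 0) + HahnSeries.single δ 1) *
          HahnSeries.single (b 0) 1) f) (b ∘ Fin.succ) -
        C (HahnSeries.single (v + k * δ) 1) *
          map HahnSeries.C ((∏ j : Fin n, (X j - C (γ j.succ))) * evalFirst (γ 0) q)) := by
  rw [← HahnSeries.C_apply, substT_evalFirst]
  set u : K := HahnSeries.C (γ 0) + HahnSeries.single δ 1
  have hC : 0 ≤ (HahnSeries.C (γ 0) : K).orderTop := HahnSeries.orderTop_single_le
  have hu : 0 ≤ u.orderTop :=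
    (le_min hC (le_trans (mod_cast hδ) HahnSeries.orderTop_single_le)).trans
      HahnSeries.min_orderTop_le_orderTop_add
  have hud : (u - HahnSeries.C (γ 0)).orderTop = (δ : WithTop ℚ) := by
    rw [add_sub_cancel_left, HahnSeries.orderTop_single one_ne_zero]
  have htk : C (HahnSeries.single (v + k * δ) 1) =
      (C (HahnSeries.single v 1) * C (HahnSeries.single δ 1 ^ k) : MvPolynomial (Fin n) K) := by
    rw [← map_mul, HahnSeries.single_pow, HahnSeries.single_mul_single, one_pow, mul_one,
      nsmul_eq_mul]
  obtain ⟨E, hE⟩ : ∃ E,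
      substT f b = E + C (HahnSeries.single v 1) * map HahnSeries.C (initForm f b) :=
    ⟨_, (sub_add_cancel (G := MvPolynomial (Fin (n + 1)) K) _ _).symm⟩
  rw [hE, add_sub_cancel_right (G := MvPolynomial (Fin (n + 1)) K)] at hO
  have hsplit : evalFirst u (substT f b) - C (HahnSeries.single (v + k * δ) 1) *
      map HahnSeries.C ((∏ j : Fin n, (X j - C (γ j.succ))) * evalFirst (γ 0) q) =
      evalFirst u E + C (HahnSeries.single (v + k * δ) 1) *
        map HahnSeries.C (∏ j : Fin n, (X j - C (γ j.succ))) *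
        (evalFirst u (map HahnSeries.C q) -
          evalFirst (HahnSeries.C (γ 0)) (map HahnSeries.C q)) := by
    rw [hE, map_add, map_mul, evalFirst_C, hfact, evalFirst_map_C_factored, htk, map_mul,
      map_evalFirst]
    ring
  rw [hsplit]
  refine (hO.evalFirst hu).mono ?_ |>.add <|
    (((isBigOT_C_single _).mul (isBigOT_map_C _)).mul
      ((isBigOT_map_C q).evalFirst_sub_evalFirst hu hC)).mono ?_
  · exact_mod_cast (by linarith : v + k * δ + δ ≤ v + (k + 1) * δ)
  · rw [hud]
    norm_cast
    simp

open MvPolynomial in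
theorem perturbation_step_general (n : ℕ) (hn : 0 < n)
    (f : MvPolynomial (Fin (n + 1)) K)
    (b : Fin (n + 1) → ℚ) (γ : Fin (n + 1) → ℂ) (hγ : ∀ j, γ j ≠ 0)
    (v : ℚ) (ε : ℚ) (hε : 0 < ε)
    (hO : ∀ i : Fin (n + 1) →₀ ℕ,
      (((v + ε : ℚ) : WithTop ℚ)) ≤
        ((substT f b).coeff i -
          HahnSeries.single v ((initForm f b).coeff i)).orderTop)
    (k : ℕ) (hk : 0 < k) (q : MvPolynomial (Fin (n + 1)) ℂ)
    (hfact : initForm f b =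
      (X 0 - C (γ 0)) ^ k *
        (∏ j : Fin n, (X j.succ - C (γ j.succ))) * q)
    (hq : substFirstC q (γ 0) ≠ 0) :
    ∀ g : MvPolynomial (Fin n) K,
      g = substFirst f
        ((HahnSeries.single (0 : ℚ) (γ 0) +
            HahnSeries.single (ε / (2 * k) : ℚ) 1) *
          HahnSeries.single (b 0) 1) →
      (∃ c₀ : ℂ, c₀ ≠ 0 ∧
          initForm g (b ∘ Fin.succ) =
            C c₀ * (∏ j : Fin n, (X j - C (γ j.succ))) *
              substFirstC q (γ 0)) ∧
        MvPolynomial.eval (γ ∘ Fin.succ) (initForm g (b ∘ Fin.succ)) = 0 ∧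
        (b ∘ Fin.succ) ∈ tropSet g := by
  rintro g rfl
  set δ := ε / (2 * k)
  set M := (∏ j : Fin n, (X j - C (γ j.succ))) * substFirstC q (γ 0)
  have hδ : 0 < δ := by positivity
  have hδε : (k + 1) * δ ≤ ε := by
    have : (1 : ℚ) ≤ k := by exact_mod_cast hk
    rw [mul_div_assoc', div_le_iff₀ (by positivity)]
    nlinarith
  have hM : M ≠ 0 := mul_ne_zero (Finset.prod_ne_zero_iff.2 fun j _ => X_sub_C_ne_zero _ _) hq
  have happrox := isBigOT_substT_evalFirst_sub hδ.le
    ((isBigOT_sub_C_single_mul_map_C_iff.2 hO).mono (mod_cast by push_cast; linarith)) hfact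
  rw [← substFirstC_eq_evalFirst, ← substFirst_eq_evalFirst] at happrox
  obtain ⟨-, hinit⟩ := trop_eq_and_initForm_eq_of_isBigOT hδ hM happrox
  have heval : eval (γ ∘ Fin.succ) M = 0 := by
    rw [map_mul, map_prod, Finset.prod_eq_zero (Finset.mem_univ ⟨0, hn⟩) (by simp), zero_mul]
  obtain ⟨i, hi, j, hj, hij⟩ := exists_mem_support_ne_of_eval_eq_zero hM (fun l => hγ l.succ) heval
  refine ⟨⟨1, one_ne_zero, by rw [hinit, map_one, one_mul]⟩, hinit ▸ heval, ?_⟩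
  exact mem_tropSet_of_mem_support_initForm _ _ (hinit ▸ hi) (hinit ▸ hj) hij

open MvPolynomial in
/-- Perturbation step of the inductive proof: given
`f(xt^b) = f̃_b·t^{f(b)} + O(t^{f(b)+ε})` and a factorization
`f̃_b = (x₁−γ₁)^k·(x₂−γ₂)⋯(xₙ−γₙ)·q` with `q(γ₁,·) ≠ 0`, the polynomial
`g = f((γ₁ + t^{ε/2k}) t^{b₁}, x₂,…,xₙ)` has initial form at `b' = (b₂,…,bₙ)`
equal to `(x₂−γ₂)⋯(xₙ−γₙ)·q(γ₁,·)` up to a nonzero constant; in particular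
`g̃_{b'}(γ₂,…,γₙ) = 0` and `b' ∈ 𝒯(g)`. -/
theorem perturbation_step (n : ℕ) (hn : 0 < n)
    (f : MvPolynomial (Fin (n + 1)) K) (hf : f ≠ 0)
    (b : Fin (n + 1) → ℚ) (γ : Fin (n + 1) → ℂ) (hγ : ∀ j, γ j ≠ 0)
    (v : ℚ) (hv : (v : WithTop ℚ) = trop f b) (ε : ℚ) (hε : 0 < ε)
    (hO : ∀ i : Fin (n + 1) →₀ ℕ,
      (((v + ε : ℚ) : WithTop ℚ)) ≤
        ((substT f b).coeff i -
          HahnSeries.single v ((initForm f b).coeff i)).orderTop)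
    (k : ℕ) (hk : 0 < k) (q : MvPolynomial (Fin (n + 1)) ℂ)
    (hfact : initForm f b =
      (X 0 - C (γ 0)) ^ k *
        (∏ j : Fin n, (X j.succ - C (γ j.succ))) * q)
    (hq : substFirstC q (γ 0) ≠ 0) :
    ∀ g : MvPolynomial (Fin n) K,
      g = substFirst f
        ((HahnSeries.single (0 : ℚ) (γ 0) +
            HahnSeries.single (ε / (2 * k) : ℚ) 1) *
          HahnSeries.single (b 0) 1) →
      (∃ c₀ : ℂ, c₀ ≠ 0 ∧
          initForm g (b ∘ Fin.succ) =
            C c₀ * (∏ j : Fin n, (X j - C (γ j.succ))) *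
              substFirstC q (γ 0)) ∧
        MvPolynomial.eval (γ ∘ Fin.succ) (initForm g (b ∘ Fin.succ)) = 0 ∧
        (b ∘ Fin.succ) ∈ tropSet g :=
  perturbation_step_general n hn f b γ hγ v ε hε hO k hk q hfact hq
end
end

section
/- If f̃ ∈ K[x₁,…,x_n] is nonzero and b ∈ ℚⁿ, then the initial form f̃_b ∈ ℂ[x₁,…,x_n] is nonzero; moreover, if a variable x_j does not occur in f̃_b, then for any γ_j ∈ ℂ*, the polynomial g̃(x₁,…,x̂_j,…,x_n) = f̃ evaluated at x_j = γ_j t^{b_j} has initial form at b with the j-th coordinate removed equal to f̃_b (with x_j formally removed), and g̃ is nonzero. -/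
noncomputable section

/-- Removing the (absent) first variable from a complex polynomial, by
substituting `1` for it. -/
def removeFirst {n : ℕ} (p : MvPolynomial (Fin (n + 1)) ℂ) :
    MvPolynomial (Fin n) ℂ :=
  Polynomial.eval (MvPolynomial.C 1) (MvPolynomial.finSuccEquiv ℂ n p)

/-! With `μ = f(b)`, the coefficient of `t^(μ - i·b)` in `ã_i` is `pc(ã_i)` when `i` attains
the minimum and `0` otherwise (all lower coefficients vanish), so `f̃_b` collects exactly these
level-`μ` coefficients; it is nonzero because the minimum is attained. Substituting
`x₁ = γ t^(b₁)` makes the coefficient of `x'^m` equal to `∑ₖ γ^k t^(k b₁) ã_(k,m)`: its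
coefficients below level `μ - m·b'` vanish, and at that level it is
`∑ₖ γ^k (f̃_b)_(k,m) = (f̃_b)_(0,m)`, because `x₁` does not occur in `f̃_b`. So `g̃` reaches
level `μ` exactly at the monomials of `f̃_b` with `x₁` removed, which gives `g̃ ≠ 0` and its
initial form at once. -/

open MvPolynomial HahnSeries

def expDot {n : ℕ} (i : Fin n →₀ ℕ) (b : Fin n → ℚ) : ℚ := ∑ j, (i j : ℚ) * b j

lemma expDot_cons {n : ℕ} (k : ℕ) (m : Fin n →₀ ℕ) (b : Fin (n + 1) → ℚ) :
    expDot (m.cons k) b = k * b 0 + expDot m (b ∘ Fin.succ) := by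
  simp [expDot, Fin.sum_univ_succ]

section Tropical

variable {n : ℕ} (f : MvPolynomial (Fin n) K) (b : Fin n → ℚ)

lemma wt_eq (i : Fin n →₀ ℕ) : wt f b i = (f.coeff i).order + expDot i b := rfl

lemma coe_le_trop_iff (μ : ℚ) :
    (μ : WithTop ℚ) ≤ trop f b ↔
      ∀ i, ∀ q < μ - expDot i b, (f.coeff i).coeff q = 0 := by
  rw [trop, Finset.le_inf_iff]
  refine ⟨fun h i => ?_, fun h i hi => ?_⟩
  · by_cases hi : i ∈ f.support
    · have hμ : μ ≤ wt f b i := WithTop.coe_le_coe.1 (h i hi)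
      exact (le_order_iff_forall (mem_support_iff.1 hi)).1 (by rw [wt_eq] at hμ; linarith)
    · simp [notMem_support_iff.1 hi]
  · have := (le_order_iff_forall (mem_support_iff.1 hi)).2 (h i)
    exact WithTop.coe_le_coe.2 (by rw [wt_eq]; linarith)

lemma trop_le_of_coeff_coeff_ne_zero {μ : ℚ} {i : Fin n →₀ ℕ}
    (h : (f.coeff i).coeff (μ - expDot i b) ≠ 0) : trop f b ≤ μ := by
  have hi : f.coeff i ≠ 0 := fun h0 => h (by rw [h0, HahnSeries.coeff_zero])
  have hord := order_le_of_coeff_ne_zero h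
  calc trop f b ≤ wt f b i := Finset.inf_le (mem_support_iff.2 hi)
    _ ≤ μ := WithTop.coe_le_coe.2 (by rw [wt_eq]; linarith)

lemma coeff_initForm (i : Fin n →₀ ℕ) :
    (initForm f b).coeff i =
      if i ∈ f.support ∧ (wt f b i : WithTop ℚ) = trop f b then pc (f.coeff i) else 0 := by
  simp only [initForm, MvPolynomial.coeff_sum, coeff_monomial, Finset.sum_ite_eq',
    Finset.mem_filter]

lemma coeff_initForm_of_trop_eq {μ : ℚ} (hμ : trop f b = μ) (i : Fin n →₀ ℕ) :
    (initForm f b).coeff i = (f.coeff i).coeff (μ - expDot i b) := by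
  rw [coeff_initForm]
  split_ifs with h
  · obtain ⟨hi, hwt⟩ := h
    rw [hμ, WithTop.coe_eq_coe, wt_eq] at hwt
    rw [pc, show μ - expDot i b = (f.coeff i).order by linarith]
  · by_cases hi : i ∈ f.support
    · have hle : (μ : WithTop ℚ) ≤ wt f b i := hμ ▸ Finset.inf_le hi
      have hlt : μ < wt f b i :=
        lt_of_le_of_ne (WithTop.coe_le_coe.1 hle) fun he => h ⟨hi, by rw [hμ, he]⟩
      rw [wt_eq] at hlt
      exact (coeff_eq_zero_of_lt_order (by linarith)).symm
    · simp [notMem_support_iff.1 hi]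

lemma exists_trop_eq {f : MvPolynomial (Fin n) K} (hf : f ≠ 0) :
    ∃ i ∈ f.support, trop f b = wt f b i :=
  Finset.exists_mem_eq_inf _ (support_nonempty.2 hf) _

lemma initForm_ne_zero {f : MvPolynomial (Fin n) K} (hf : f ≠ 0) : initForm f b ≠ 0 := by
  obtain ⟨i, hi, hμ⟩ := exists_trop_eq b hf
  have hcoeff := coeff_initForm_of_trop_eq f b hμ i
  rw [wt_eq, add_sub_cancel_right] at hcoeff
  intro h0
  rw [h0, MvPolynomial.coeff_zero, eq_comm, coeff_order_eq_zero] at hcoeff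
  exact mem_support_iff.1 hi hcoeff

lemma ne_zero_of_trop_eq {μ : ℚ} (hμ : trop f b = μ) : f ≠ 0 := by
  rintro rfl
  simp [trop] at hμ

lemma trop_eq_and_initForm_eq {μ : ℚ} {p : MvPolynomial (Fin n) ℂ} (hp : p ≠ 0)
    (hlow : ∀ i, ∀ q < μ - expDot i b, (f.coeff i).coeff q = 0)
    (hlevel : ∀ i, (f.coeff i).coeff (μ - expDot i b) = p.coeff i) :
    trop f b = μ ∧ initForm f b = p := by
  obtain ⟨i, hi⟩ := ne_zero_iff.1 hp
  have htrop : trop f b = μ := le_antisymm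
    (trop_le_of_coeff_coeff_ne_zero f b (by rwa [hlevel]))
    ((coe_le_trop_iff f b μ).2 hlow)
  refine ⟨htrop, ?_⟩
  ext j
  rw [coeff_initForm_of_trop_eq f b htrop, hlevel]

end Tropical

section Substitution

variable {n : ℕ}

lemma coeff_eval_C_finSuccEquiv {R : Type*} [CommSemiring R]
    (f : MvPolynomial (Fin (n + 1)) R) (c : R) (m : Fin n →₀ ℕ) :
    (Polynomial.eval (C c) (finSuccEquiv R n f)).coeff m =
      ∑ k ∈ Finset.range ((finSuccEquiv R n f).natDegree + 1), c ^ k * f.coeff (m.cons k) := by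
  rw [Polynomial.eval_eq_sum_range, MvPolynomial.coeff_sum]
  refine Finset.sum_congr rfl fun k _ => ?_
  rw [mul_comm, ← map_pow, coeff_C_mul, finSuccEquiv_coeff_coeff]

lemma sum_range_mul_coeff_cons {R : Type*} [CommSemiring R] {p : MvPolynomial (Fin (n + 1)) R}
    (hp : ∀ i ∈ p.support, i 0 = 0) (N : ℕ) (w : ℕ → R) (m : Fin n →₀ ℕ) :
    ∑ k ∈ Finset.range (N + 1), w k * p.coeff (m.cons k) = w 0 * p.coeff (m.cons 0) := by
  refine Finset.sum_eq_single 0 (fun k _ hk => ?_) (by simp)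
  rw [notMem_support_iff.1 fun hs => hk (by simpa using hp _ hs), mul_zero]

lemma coeff_removeFirst {p : MvPolynomial (Fin (n + 1)) ℂ} (hp : ∀ i ∈ p.support, i 0 = 0)
    (m : Fin n →₀ ℕ) : (removeFirst p).coeff m = p.coeff (m.cons 0) := by
  rw [removeFirst, coeff_eval_C_finSuccEquiv, sum_range_mul_coeff_cons hp, pow_zero, one_mul]

lemma removeFirst_ne_zero {p : MvPolynomial (Fin (n + 1)) ℂ} (hp : ∀ i ∈ p.support, i 0 = 0)
    (hp0 : p ≠ 0) : removeFirst p ≠ 0 := by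
  obtain ⟨i, hi⟩ := support_nonempty.2 hp0
  refine ne_zero_iff.2 ⟨i.tail, ?_⟩
  rw [coeff_removeFirst hp, ← hp i hi, Finsupp.cons_tail]
  exact mem_support_iff.1 hi

lemma coeff_coeff_substFirst_single (f : MvPolynomial (Fin (n + 1)) K) (a : ℚ) (γ : ℂ)
    (m : Fin n →₀ ℕ) (q : ℚ) :
    ((substFirst f (single a γ)).coeff m).coeff q =
      ∑ k ∈ Finset.range ((finSuccEquiv K n f).natDegree + 1),
        γ ^ k * (f.coeff (m.cons k)).coeff (q - k * a) := by
  simp [substFirst, coeff_eval_C_finSuccEquiv, single_pow, coeff_single_mul]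

end Substitution

section RemoveVar

variable {n : ℕ} {f : MvPolynomial (Fin (n + 1)) K} {b : Fin (n + 1) → ℚ}

lemma first_eq_zero_of_mem_support_initForm
    (hfree : ∀ i ∈ f.support, (wt f b i : WithTop ℚ) = trop f b → i 0 = 0) :
    ∀ i ∈ (initForm f b).support, i 0 = 0 := by
  intro i hi
  rw [mem_support_iff, coeff_initForm] at hi
  split_ifs at hi with h
  · exact hfree i h.1 h.2
  · exact absurd rfl hi

lemma coeff_coeff_substFirst_eq_zero {μ : ℚ} (hμ : (μ : WithTop ℚ) ≤ trop f b) (γ : ℂ)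
    (m : Fin n →₀ ℕ) {q : ℚ} (hq : q < μ - expDot m (b ∘ Fin.succ)) :
    ((substFirst f (single (b 0) γ)).coeff m).coeff q = 0 := by
  rw [coeff_coeff_substFirst_single]
  refine Finset.sum_eq_zero fun k _ => ?_
  rw [(coe_le_trop_iff f b μ).1 hμ _ _ (by rw [expDot_cons]; linarith), mul_zero]

lemma coeff_coeff_substFirst_at_trop {μ : ℚ} (hμ : trop f b = μ)
    (hfree : ∀ i ∈ (initForm f b).support, i 0 = 0) (γ : ℂ) (m : Fin n →₀ ℕ) :
    ((substFirst f (single (b 0) γ)).coeff m).coeff (μ - expDot m (b ∘ Fin.succ)) =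
      (removeFirst (initForm f b)).coeff m := by
  have hlevel (k : ℕ) : (f.coeff (m.cons k)).coeff (μ - expDot m (b ∘ Fin.succ) - k * b 0) =
      (initForm f b).coeff (m.cons k) := by
    rw [coeff_initForm_of_trop_eq f b hμ, expDot_cons, sub_sub, add_comm (expDot _ _)]
  simp_rw [coeff_coeff_substFirst_single, hlevel, sum_range_mul_coeff_cons hfree,
    coeff_removeFirst hfree, pow_zero, one_mul]

end RemoveVar

/-- If `f ≠ 0` then `f̃_b ≠ 0`; moreover, if the first variable does not occur
in `f̃_b` (every index attaining the minimum has first exponent `0`), then for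
any `γ₁ ∈ ℂ*`, the polynomial `g = f(γ₁ t^{b₁}, x₂,…,xₙ)` is nonzero and its
initial form at `b' = (b₂,…,bₙ)` equals `f̃_b` with the first variable formally
removed. -/
theorem initForm_ne_zero_and_remove_var (n : ℕ)
    (f : MvPolynomial (Fin (n + 1)) K) (hf : f ≠ 0) (b : Fin (n + 1) → ℚ) :
    initForm f b ≠ 0 ∧
      ∀ γ₁ : ℂ, γ₁ ≠ 0 →
        (∀ i ∈ f.support, (wt f b i : WithTop ℚ) = trop f b → i 0 = 0) →
        substFirst f (HahnSeries.single (b 0) γ₁) ≠ 0 ∧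
          initForm (substFirst f (HahnSeries.single (b 0) γ₁)) (b ∘ Fin.succ) =
            removeFirst (initForm f b) := by
  refine ⟨initForm_ne_zero b hf, fun γ₁ _ hfree => ?_⟩
  obtain ⟨i, -, hμ⟩ := exists_trop_eq b hf
  have hfree' := first_eq_zero_of_mem_support_initForm hfree
  obtain ⟨htrop, hinit⟩ := trop_eq_and_initForm_eq _ (b ∘ Fin.succ)
    (removeFirst_ne_zero hfree' (initForm_ne_zero b hf))
    (fun m _ => coeff_coeff_substFirst_eq_zero hμ.ge γ₁ m)
    (coeff_coeff_substFirst_at_trop hμ hfree' γ₁)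
  exact ⟨ne_zero_of_trop_eq _ _ htrop, hinit⟩
end
end
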